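/- arXiv:1812.09491 — 10 statements merged into one kernel-verified Lean document; each statement's English description precedes it below -/
import Mathlib

section
/- Let L be a bounded modular lattice equipped with a complementation ' (i.e., x ⊔ x' = ⊤ and x ⊓ x' = ⊥ for all x). Define x ⊙ y := (x ⊔ y') ⊓ y and x → y := (x ⊓ y) ⊔ x'. Then for all x, y, z ∈ L: x ⊙ y ≤ z if and only if x ≤ y → z (left adjointness). -/
section

variable {L : Type*} [Lattice L] [IsModularLattice L] {a b x z : L}

theorem Codisjoint.le_inf_sup_of_sup_inf_le [OrderTop L] (hab : Codisjoint a b)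
    (h : (x ⊔ b) ⊓ a ≤ z) : x ≤ a ⊓ z ⊔ b :=
  calc x ≤ x ⊔ b := le_sup_left
    _ = (x ⊔ b) ⊓ a ⊔ b := by
      rw [inf_sup_assoc_of_le a le_sup_right, codisjoint_iff.mp hab, inf_top_eq]
    _ ≤ a ⊓ z ⊔ b := sup_le_sup_right (le_inf inf_le_right h) b

theorem Disjoint.sup_inf_le_of_le_inf_sup [OrderBot L] (hab : Disjoint a b)
    (h : x ≤ a ⊓ z ⊔ b) : (x ⊔ b) ⊓ a ≤ z :=
  calc (x ⊔ b) ⊓ a ≤ (a ⊓ z ⊔ b) ⊓ a := inf_le_inf_right a (sup_le h le_sup_right)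
    _ = a ⊓ z := by
      rw [sup_inf_assoc_of_le b inf_le_left, inf_comm b, disjoint_iff.mp hab, sup_bot_eq]
    _ ≤ z := inf_le_right

theorem IsCompl.gc_sup_inf [BoundedOrder L] (hab : IsCompl a b) :
    GaloisConnection (fun x => (x ⊔ b) ⊓ a) (fun z => a ⊓ z ⊔ b) := fun _ _ =>
  ⟨hab.codisjoint.le_inf_sup_of_sup_inf_le, hab.disjoint.sup_inf_le_of_le_inf_sup⟩

end

/-- In a bounded modular lattice with a complementation `c`,
defining `x ⊙ y := (x ⊔ c y) ⊓ y` and `x → y := (x ⊓ y) ⊔ c x`, left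
adjointness holds: `x ⊙ y ≤ z ↔ x ≤ y → z`. -/
theorem stmt_1 {L : Type*} [Lattice L] [BoundedOrder L] (c : L → L)
    (hmod : ∀ x y z : L, x ≤ z → (x ⊔ y) ⊓ z = x ⊔ (y ⊓ z))
    (hsup : ∀ x : L, x ⊔ c x = ⊤) (hinf : ∀ x : L, x ⊓ c x = ⊥) :
    ∀ x y z : L, (x ⊔ c y) ⊓ y ≤ z ↔ x ≤ (y ⊓ z) ⊔ c y := by
  have : IsModularLattice L := ⟨fun y _ hxz => (hmod _ y _ hxz).le⟩
  intro x y z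
  exact (IsCompl.of_eq (hinf y) (hsup y)).gc_sup_inf x z
end

section
/- Let L be a bounded modular lattice equipped with a complementation ' (i.e., x ⊔ x' = ⊤ and x ⊓ x' = ⊥ for all x). Define x ⊙ y := (x ⊔ y') ⊓ y and x → y := (x ⊓ y) ⊔ x'. Then the divisibility identity (x → y) ⊙ x = x ⊓ y holds for all x, y ∈ L. -/
theorem stmt_2_general {L : Type*} [Lattice L] [BoundedOrder L] (c : L → L)
    (hmod : ∀ x y z : L, x ≤ z → (x ⊔ y) ⊓ z = x ⊔ (y ⊓ z))
    (hinf : ∀ x : L, x ⊓ c x = ⊥) :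
    ∀ x y : L, (((x ⊓ y) ⊔ c x) ⊔ c x) ⊓ x = x ⊓ y := by
  intro x y
  calc (((x ⊓ y) ⊔ c x) ⊔ c x) ⊓ x = ((x ⊓ y) ⊔ c x) ⊓ x := by rw [sup_assoc, sup_idem]
    _ = (x ⊓ y) ⊔ (c x ⊓ x) := hmod _ _ _ inf_le_left
    _ = x ⊓ y := by rw [inf_comm (c x) x, hinf, sup_bot_eq]

/-- In a bounded modular lattice with a complementation `c`,
defining `x ⊙ y := (x ⊔ c y) ⊓ y` and `x → y := (x ⊓ y) ⊔ c x`, the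
divisibility identity `(x → y) ⊙ x = x ⊓ y` holds. -/
theorem stmt_2 {L : Type*} [Lattice L] [BoundedOrder L] (c : L → L)
    (hmod : ∀ x y z : L, x ≤ z → (x ⊔ y) ⊓ z = x ⊔ (y ⊓ z))
    (hsup : ∀ x : L, x ⊔ c x = ⊤) (hinf : ∀ x : L, x ⊓ c x = ⊥) :
    ∀ x y : L, (((x ⊓ y) ⊔ c x) ⊔ c x) ⊓ x = x ⊓ y :=
  stmt_2_general c hmod hinf
end

section
/- Every strongly modular poset is modular: if a poset P satisfies, for all x, y, z ∈ P, the identities L(U(x,y) ∪ U(x,z)) = L(U({x} ∪ L({y} ∪ U(x,z)))) and L(U(L(x,z) ∪ {y}) ∪ {z}) = L(U(L(x,z) ∪ L(y,z))), then for all x, y, z ∈ P with x ≤ z one has L(U(x,y) ∪ {z}) = L(U({x} ∪ L(y,z))). -/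
/-- Every strongly modular poset is modular. -/
theorem stmt_3 {P : Type*} [PartialOrder P]
    (h3 : ∀ x y z : P,
      lowerBounds (upperBounds {x, y} ∪ upperBounds {x, z}) =
        lowerBounds (upperBounds ({x} ∪ lowerBounds ({y} ∪ upperBounds {x, z}))))
    (h4 : ∀ x y z : P,
      lowerBounds (upperBounds (lowerBounds {x, z} ∪ {y}) ∪ {z}) =
        lowerBounds (upperBounds (lowerBounds {x, z} ∪ lowerBounds {y, z}))) :
    ∀ x y z : P, x ≤ z →
      lowerBounds (upperBounds {x, y} ∪ {z}) =
        lowerBounds (upperBounds ({x} ∪ lowerBounds {y, z})) := by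
  intro x y z hxz
  have hL : lowerBounds ({x, z} : Set P) = Set.Iic x := by
    ext w
    constructor
    · intro h; exact h (Set.mem_insert x {z})
    · intro h a ha
      rcases ha with rfl | ha
      · exact h
      · rcases ha with rfl
        exact le_trans h hxz
  have key : ∀ S : Set P, upperBounds (Set.Iic x ∪ S) = upperBounds ({x} ∪ S) := by
    intro S
    rw [upperBounds_union, upperBounds_union, upperBounds_Iic, upperBounds_singleton]
  have h := h4 x y z
  rw [hL, key, key, Set.singleton_union] at h
  exact h
end

section
/- Let L be a complete lattice satisfying the modular law. Then L satisfies condition (1) of strict modularity: for all a, b ∈ L and every subset C ⊆ L such that a is a lower bound of C, one has L(U(a,b) ∪ C) = L(U({a} ∪ L({b} ∪ C))). -/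
open Set

section CompleteLattice

variable {α : Type*} [CompleteLattice α]

theorem lowerBounds_eq_Iic_sInf (s : Set α) : lowerBounds s = Iic (sInf s) :=
  (isGLB_sInf s).lowerBounds_eq

theorem lowerBounds_upperBounds_eq_Iic_sSup (s : Set α) :
    lowerBounds (upperBounds s) = Iic (sSup s) := by
  rw [(isLUB_sSup s).upperBounds_eq, lowerBounds_Ici]

theorem lowerBounds_upperBounds_pair_union (a b : α) (C : Set α) :
    lowerBounds (upperBounds {a, b} ∪ C) = Iic ((a ⊔ b) ⊓ sInf C) := by
  rw [lowerBounds_union, lowerBounds_upperBounds_eq_Iic_sSup, lowerBounds_eq_Iic_sInf C,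
    sSup_pair, Iic_inter_Iic]

theorem lowerBounds_upperBounds_singleton_union_lowerBounds (a b : α) (C : Set α) :
    lowerBounds (upperBounds ({a} ∪ lowerBounds ({b} ∪ C))) = Iic (a ⊔ b ⊓ sInf C) := by
  rw [lowerBounds_upperBounds_eq_Iic_sSup, sSup_union, sSup_singleton, lowerBounds_eq_Iic_sInf,
    sInf_union, sInf_singleton, csSup_Iic]

end CompleteLattice

/-- A complete modular lattice satisfies condition (1) of strict
modularity. -/
theorem stmt_5 {L : Type*} [CompleteLattice L]
    (hmod : ∀ x y z : L, x ≤ z → (x ⊔ y) ⊓ z = x ⊔ (y ⊓ z)) :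
    ∀ (a b : L) (C : Set L), a ∈ lowerBounds C →
      lowerBounds (upperBounds {a, b} ∪ C) =
        lowerBounds (upperBounds ({a} ∪ lowerBounds ({b} ∪ C))) := by
  intro a b C haC
  rw [lowerBounds_upperBounds_pair_union, lowerBounds_upperBounds_singleton_union_lowerBounds,
    hmod a b (sInf C) (le_sInf haC)]
end

section
/- Let (P, ≤, ', ⊥, ⊤) be a bounded strongly modular poset with a complementation ' (i.e., U(x,x') = {⊤} and L(x,x') = {⊥} for all x). Define M(x,y) := L(U(x,y') ∪ {y}) and R(x,y) := L(U(L(x,y) ∪ {x'})). Then the operator divisibility identity M(R(x,y), x) = L(x,y) holds for all x, y ∈ P, where M(A, x) for a set A means L(U(A ∪ {x'}) ∪ {x}). -/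
/- With `B := L(x,y) ∪ {x'}`, the element `x'` already lies in `L(U(B))`, so the left side is
`L(U(L(y,x) ∪ {x'}) ∪ {x})`. Identity (4) for `(y, x', x)` turns this into
`L(U(L(x,y) ∪ L(x',x))) = L(U(L(x,y) ∪ {⊥})) = L(x,y)`. -/

section Bounds

variable {α : Type*} [Preorder α]

theorem upperBounds_lowerBounds_upperBounds (s : Set α) :
    upperBounds (lowerBounds (upperBounds s)) = upperBounds s :=
  gc_upperBounds_lowerBounds.l_u_l_eq_l s

theorem lowerBounds_upperBounds_lowerBounds (s : Set α) :
    lowerBounds (upperBounds (lowerBounds s)) = lowerBounds s :=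
  gc_upperBounds_lowerBounds.u_l_u_eq_u s

theorem upperBounds_lowerBounds_upperBounds_union_singleton {s : Set α} {a : α} (ha : a ∈ s) :
    upperBounds (lowerBounds (upperBounds s) ∪ {a}) = upperBounds s := by
  have hmem : a ∈ lowerBounds (upperBounds s) := fun _ hu ↦ hu ha
  rw [Set.union_eq_self_of_subset_right (Set.singleton_subset_iff.mpr hmem),
    upperBounds_lowerBounds_upperBounds]

theorem upperBounds_union_singleton_bot [OrderBot α] (s : Set α) :
    upperBounds (s ∪ {⊥}) = upperBounds s := by
  simp only [upperBounds_union, upperBounds_singleton, Set.Ici_bot, Set.inter_univ]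

end Bounds

theorem stmt_8_general {P : Type*} [PartialOrder P] [BoundedOrder P] (n : P → P)
    (h4 : ∀ x y z : P,
      lowerBounds (upperBounds (lowerBounds {x, z} ∪ {y}) ∪ {z}) =
        lowerBounds (upperBounds (lowerBounds {x, z} ∪ lowerBounds {y, z})))
    (hL : ∀ x : P, lowerBounds {x, n x} = {⊥}) :
    ∀ x y : P,
      lowerBounds
        (upperBounds
          (lowerBounds (upperBounds (lowerBounds {x, y} ∪ {n x})) ∪ {n x}) ∪ {x}) =
        lowerBounds {x, y} := by
  intro x y
  have hnx : n x ∈ lowerBounds {x, y} ∪ {n x} := Set.mem_union_right _ (Set.mem_singleton _)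
  rw [upperBounds_lowerBounds_upperBounds_union_singleton hnx,
    Set.pair_comm x y, h4 y (n x) x, Set.pair_comm (n x) x, hL x,
    upperBounds_union_singleton_bot, lowerBounds_upperBounds_lowerBounds]

/-- In a bounded strongly modular poset with complementation `n`,
with `R(x,y) := L(U(L(x,y) ∪ {n x}))` and `M(A,x) := L(U(A ∪ {n x}) ∪ {x})`,
the operator divisibility identity `M(R(x,y), x) = L(x,y)` holds. -/
theorem stmt_8 {P : Type*} [PartialOrder P] [BoundedOrder P] (n : P → P)
    (h3 : ∀ x y z : P,
      lowerBounds (upperBounds {x, y} ∪ upperBounds {x, z}) =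
        lowerBounds (upperBounds ({x} ∪ lowerBounds ({y} ∪ upperBounds {x, z}))))
    (h4 : ∀ x y z : P,
      lowerBounds (upperBounds (lowerBounds {x, z} ∪ {y}) ∪ {z}) =
        lowerBounds (upperBounds (lowerBounds {x, z} ∪ lowerBounds {y, z})))
    (hU : ∀ x : P, upperBounds {x, n x} = {⊤})
    (hL : ∀ x : P, lowerBounds {x, n x} = {⊥}) :
    ∀ x y : P,
      lowerBounds
        (upperBounds
          (lowerBounds (upperBounds (lowerBounds {x, y} ∪ {n x})) ∪ {n x}) ∪ {x}) =
        lowerBounds {x, y} :=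
  stmt_8_general n h4 hL
end

section
/- Let (P, ≤, ', ⊥, ⊤) be a bounded strongly modular poset with a complementation ' (i.e., U(x,x') = {⊤} and L(x,x') = {⊥} for all x). Define M(x,y) := L(U(x,y') ∪ {y}) and R(x,y) := L(U(L(x,y) ∪ {x'})). Then for all a, b, c ∈ P: M(a,b) ⊆ L({c}) if and only if L({a}) ⊆ R(b,c) (operator left adjointness). -/
/-!
Forward direction: identity (3) at `(n b, b, a)`, together with `U(n b, b) = {⊤}`, rewrites
`L(U(a, n b))`, which contains `a`, as `L(U({n b} ∪ M(a,b)))`; if `M(a,b) ⊆ L(c)` then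
`M(a,b) ⊆ L(b,c)`, so this set lies inside `R(b,c)`.

Backward direction: identity (4) at `(c, n b, b)`, together with `L(n b, b) = {⊥}`, gives
`L(U(L(b,c) ∪ {n b}) ∪ {b}) = L(U(L(b,c)))`. If `a ∈ R(b,c)`, every upper bound of
`L(b,c) ∪ {n b}` bounds `a` and `n b`, so `M(a,b)` lies inside the left-hand side, and the
right-hand side lies inside `L(c)`.
-/

open Set

namespace StronglyModular

variable {P : Type*} [PartialOrder P]

def opM (n : P → P) (x y : P) : Set P := lowerBounds (upperBounds {x, n y} ∪ {y})

def opR (n : P → P) (x y : P) : Set P := lowerBounds (upperBounds (lowerBounds {x, y} ∪ {n x}))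

theorem lowerBounds_singleton_subset_lowerBounds_iff {a : P} {s : Set P} :
    lowerBounds {a} ⊆ lowerBounds s ↔ a ∈ lowerBounds s :=
  ⟨fun h => h fun _ hy => hy.ge, fun ha _ hx _ hy => le_trans (hx rfl) (ha hy)⟩

theorem mem_opR_of_opM_subset [OrderTop P] {n : P → P}
    (h3 : ∀ x y z : P,
      lowerBounds (upperBounds {x, y} ∪ upperBounds {x, z}) =
        lowerBounds (upperBounds ({x} ∪ lowerBounds ({y} ∪ upperBounds {x, z}))))
    {a b c : P} (hU : upperBounds {b, n b} = {⊤}) (h : opM n a b ⊆ lowerBounds {c}) :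
    a ∈ opR n b c := by
  have hkey : lowerBounds (upperBounds {a, n b}) =
      lowerBounds (upperBounds ({n b} ∪ opM n a b)) := by
    have := h3 (n b) b a
    rwa [pair_comm (n b) b, hU, pair_comm (n b) a, lowerBounds_union, lowerBounds_singleton,
      Iic_top, univ_inter, union_comm {b}] at this
  have hM : opM n a b ⊆ lowerBounds {b, c} := by
    rw [lowerBounds_insert]
    exact subset_inter (fun x hx => hx (mem_union_right _ rfl)) h
  have ha : a ∈ lowerBounds (upperBounds ({n b} ∪ opM n a b)) :=
    hkey ▸ subset_lowerBounds_upperBounds _ (mem_insert a _)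
  rw [opR, union_comm]
  exact lowerBounds_mono_set (upperBounds_mono_set (union_subset_union_right _ hM)) ha

theorem opM_subset_of_mem_opR [OrderBot P] {n : P → P}
    (h4 : ∀ x y z : P,
      lowerBounds (upperBounds (lowerBounds {x, z} ∪ {y}) ∪ {z}) =
        lowerBounds (upperBounds (lowerBounds {x, z} ∪ lowerBounds {y, z})))
    {a b c : P} (hL : lowerBounds {b, n b} = {⊥}) (ha : a ∈ opR n b c) :
    opM n a b ⊆ lowerBounds {c} := by
  have hkey : lowerBounds (upperBounds (lowerBounds {b, c} ∪ {n b}) ∪ {b}) =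
      lowerBounds (upperBounds (lowerBounds {b, c})) := by
    have := h4 c (n b) b
    rwa [pair_comm c b, pair_comm (n b) b, hL, union_singleton (a := ⊥), upperBounds_insert, Ici_bot,
      univ_inter] at this
  have hU : upperBounds (lowerBounds {b, c} ∪ {n b}) ⊆ upperBounds {a, n b} := fun u hu =>
    forall_mem_insert.2 ⟨ha hu, forall_eq.2 (hu (mem_union_right _ rfl))⟩
  have hc : c ∈ upperBounds (lowerBounds {b, c}) := fun _ hx => hx (mem_insert_of_mem _ rfl)
  intro x hx
  have hx' : x ∈ lowerBounds (upperBounds (lowerBounds {b, c})) :=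
    hkey ▸ lowerBounds_mono_set (union_subset_union_left _ hU) hx
  exact forall_eq.2 (hx' hc)

end StronglyModular

open StronglyModular in
/-- In a bounded strongly modular poset with complementation `n`,
with `M(x,y) := L(U(x, n y) ∪ {y})` and `R(x,y) := L(U(L(x,y) ∪ {n x}))`,
operator left adjointness holds: `M(a,b) ⊆ L({c}) ↔ L({a}) ⊆ R(b,c)`. -/
theorem stmt_9 {P : Type*} [PartialOrder P] [BoundedOrder P] (n : P → P)
    (h3 : ∀ x y z : P,
      lowerBounds (upperBounds {x, y} ∪ upperBounds {x, z}) =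
        lowerBounds (upperBounds ({x} ∪ lowerBounds ({y} ∪ upperBounds {x, z}))))
    (h4 : ∀ x y z : P,
      lowerBounds (upperBounds (lowerBounds {x, z} ∪ {y}) ∪ {z}) =
        lowerBounds (upperBounds (lowerBounds {x, z} ∪ lowerBounds {y, z})))
    (hU : ∀ x : P, upperBounds {x, n x} = {⊤})
    (hL : ∀ x : P, lowerBounds {x, n x} = {⊥}) :
    ∀ a b c : P,
      lowerBounds (upperBounds {a, n b} ∪ {b}) ⊆ lowerBounds {c} ↔
        lowerBounds {a} ⊆ lowerBounds (upperBounds (lowerBounds {b, c} ∪ {n b})) := by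
  intro a b c
  rw [lowerBounds_singleton_subset_lowerBounds_iff]
  exact ⟨mem_opR_of_opM_subset h3 (hU b), opM_subset_of_mem_opR h4 (hL b)⟩
end

section
/- Let (P, ≤, ', ⊥, ⊤) be a bounded strictly modular poset with a complementation ' (i.e., U(x,x') = {⊤} and L(x,x') = {⊥} for all x). Define M(x,y) := L(U(x,y') ∪ {y}) and R(x,y) := L(U(L(x,y) ∪ {x'})). Then for all a, b, c ∈ P: M(a,b) ⊆ L({c}) if and only if L({a}) ⊆ R(b,c) (operator left adjointness). -/
/-!
The two inclusions are the unit and counit of a Galois connection between `M(·, b)` and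
`R(b, ·)`. Condition (1) of strict modularity with `x = b'`, `Z = U(a, b')` together with
`U(b', b) = {⊤}` gives `a ∈ L(U(M(a, b) ∪ {b'}))`, and since `M(a, b) ⊆ L(b, c)` whenever
`M(a, b) ⊆ L(c)`, this yields `a ∈ R(b, c)`. Condition (2) with `X = {b, c}`, `y = b'`,
`z = b` together with `L(b', b) = {⊥}` gives `L(U(L(b, c) ∪ {b'}) ∪ {b}) ⊆ L(c)`, and
`a ∈ R(b, c)` puts `M(a, b)` inside the left-hand side.
-/

open Set

section StrictlyModular

variable {P : Type*} [PartialOrder P] (n : P → P)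

def opM (x y : P) : Set P := lowerBounds (upperBounds {x, n y} ∪ {y})

def opR (x y : P) : Set P := lowerBounds (upperBounds (lowerBounds {x, y} ∪ {n x}))

theorem Iic_subset_lowerBounds_iff {a : P} {s : Set P} :
    Iic a ⊆ lowerBounds s ↔ a ∈ lowerBounds s :=
  ⟨fun h => h le_rfl, fun ha _ hw _ hu => le_trans hw (ha hu)⟩

variable {n}

theorem opM_subset_lowerBounds_pair {a b c : P} (h : opM n a b ⊆ Iic c) :
    opM n a b ⊆ lowerBounds {b, c} := by
  rintro w hw x (rfl | rfl)
  · exact hw (Or.inr rfl)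
  · exact h hw

theorem mem_lowerBounds_upperBounds_opM_union [OrderTop P]
    (hmod : ∀ (x y : P) (Z : Set P), x ∈ lowerBounds Z →
      lowerBounds (upperBounds {x, y} ∪ Z) =
        lowerBounds (upperBounds ({x} ∪ lowerBounds ({y} ∪ Z))))
    {a b : P} (hb : upperBounds {b, n b} = {⊤}) :
    a ∈ lowerBounds (upperBounds (opM n a b ∪ {n b})) := by
  have key := hmod (n b) b (upperBounds {a, n b}) fun u hu => hu (by simp)
  have ha : a ∈ lowerBounds (upperBounds {n b, b} ∪ upperBounds {a, n b}) := by
    rw [pair_comm (n b), hb]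
    rintro u (rfl | hu)
    · exact le_top
    · exact hu (by simp)
  rwa [key, union_comm {b}, union_comm {n b}] at ha

theorem lowerBounds_upperBounds_lowerBounds_pair_union_subset_Iic [OrderBot P]
    (hmod : ∀ (y z : P) (X : Set P), (∀ w ∈ lowerBounds X, w ≤ z) →
      lowerBounds (upperBounds (lowerBounds X ∪ {y}) ∪ {z}) =
        lowerBounds (upperBounds (lowerBounds X ∪ lowerBounds {y, z})))
    {b c : P} (hb : lowerBounds {b, n b} = {⊥}) :
    lowerBounds (upperBounds (lowerBounds {b, c} ∪ {n b}) ∪ {b}) ⊆ Iic c := by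
  rw [hmod (n b) b {b, c} fun w hw => hw (by simp), pair_comm (n b), hb]
  intro w hw
  apply hw
  rintro x (hx | rfl)
  · exact hx (by simp)
  · exact bot_le

theorem opM_subset_of_mem_opR {a b c : P} (ha : a ∈ opR n b c) :
    opM n a b ⊆ lowerBounds (upperBounds (lowerBounds {b, c} ∪ {n b}) ∪ {b}) := by
  refine lowerBounds_mono_set (union_subset_union_left _ fun u hu => ?_)
  rintro x (rfl | rfl)
  · exact ha hu
  · exact hu (Or.inr rfl)

end StrictlyModular

/-- In a bounded strictly modular poset with complementation `n`,
with `M(x,y) := L(U(x, n y) ∪ {y})` and `R(x,y) := L(U(L(x,y) ∪ {n x}))`,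
operator left adjointness holds: `M(a,b) ⊆ L({c}) ↔ L({a}) ⊆ R(b,c)`. -/
theorem stmt_11 {P : Type*} [PartialOrder P] [BoundedOrder P] (n : P → P)
    (h1 : ∀ (x y : P) (Z : Set P), x ∈ lowerBounds Z →
      lowerBounds (upperBounds {x, y} ∪ Z) =
        lowerBounds (upperBounds ({x} ∪ lowerBounds ({y} ∪ Z))))
    (h2 : ∀ (y z : P) (X : Set P), (∀ w ∈ lowerBounds X, w ≤ z) →
      lowerBounds (upperBounds (lowerBounds X ∪ {y}) ∪ {z}) =
        lowerBounds (upperBounds (lowerBounds X ∪ lowerBounds {y, z})))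
    (hU : ∀ x : P, upperBounds {x, n x} = {⊤})
    (hL : ∀ x : P, lowerBounds {x, n x} = {⊥}) :
    ∀ a b c : P,
      lowerBounds (upperBounds {a, n b} ∪ {b}) ⊆ lowerBounds {c} ↔
        lowerBounds {a} ⊆ lowerBounds (upperBounds (lowerBounds {b, c} ∪ {n b})) := by
  intro a b c
  change opM n a b ⊆ _ ↔ _
  rw [lowerBounds_singleton, lowerBounds_singleton, Iic_subset_lowerBounds_iff]
  constructor
  · intro h
    exact lowerBounds_mono_set
      (upperBounds_mono_set (union_subset_union_left _ (opM_subset_lowerBounds_pair h)))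
      (mem_lowerBounds_upperBounds_opM_union h1 (hU b))
  · intro ha
    exact (opM_subset_of_mem_opR ha).trans
      (lowerBounds_upperBounds_lowerBounds_pair_union_subset_Iic h2 (hL b))
end

section
/- Let P be a poset with an antitone involution ' and for A ⊆ P set A* := L(A') where A' := {x' | x ∈ A}. Then for all subsets A, B ⊆ P with L(U(A)) = A and L(U(B)) = B: (i) A ⊆ B implies B* ⊆ A*, and (ii) A** = A. -/
/-! The involution turns `x ≤ a'` into `a ≤ x'`, so `A* = L(A')` is the preimage of `U(A)` under `'`;
applying `'` once more gives `(A*)' = U(A)`, hence `A** = L(U(A)) = A` for closed `A`. -/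

open Function

section AntitoneInvolution

variable {P : Type*} [Preorder P] {n : P → P}

theorem le_apply_comm_of_antitone_of_involutive (hanti : Antitone n) (hinv : Involutive n)
    {x y : P} (h : x ≤ n y) : y ≤ n x :=
  hinv y ▸ hanti h

theorem lowerBounds_image_eq_preimage_upperBounds (hanti : Antitone n) (hinv : Involutive n)
    (A : Set P) : lowerBounds (n '' A) = n ⁻¹' upperBounds A := by
  ext x
  simp only [mem_lowerBounds, Set.forall_mem_image, Set.mem_preimage, mem_upperBounds]
  exact forall₂_congr fun _ _ =>
    ⟨le_apply_comm_of_antitone_of_involutive hanti hinv,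
      le_apply_comm_of_antitone_of_involutive hanti hinv⟩

theorem image_lowerBounds_image_eq_upperBounds (hanti : Antitone n) (hinv : Involutive n)
    (A : Set P) : n '' lowerBounds (n '' A) = upperBounds A := by
  rw [lowerBounds_image_eq_preimage_upperBounds hanti hinv, Set.image_preimage_eq _ hinv.surjective]

end AntitoneInvolution

/-- For a poset with an antitone involution `n`, setting
`A* := L(n '' A)`, for closed subsets `A`, `B` (i.e. `L(U(A)) = A`): `A ⊆ B`
implies `B* ⊆ A*`, and `A** = A`. -/
theorem stmt_13 {P : Type*} [PartialOrder P] (n : P → P)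
    (hanti : ∀ x y : P, x ≤ y → n y ≤ n x) (hinv : ∀ x : P, n (n x) = x) :
    ∀ A B : Set P, lowerBounds (upperBounds A) = A →
      lowerBounds (upperBounds B) = B →
      (A ⊆ B → lowerBounds (n '' B) ⊆ lowerBounds (n '' A)) ∧
      lowerBounds (n '' lowerBounds (n '' A)) = A := by
  intro A B hA _
  refine ⟨fun hAB => lowerBounds_mono_set (Set.image_mono hAB), ?_⟩
  rw [image_lowerBounds_image_eq_upperBounds (fun x y => hanti x y) hinv, hA]
end

section
/- Let (P, ≤, ', ⊥, ⊤) be an orthoposet, i.e., a bounded poset with an antitone involution ' satisfying U(x,x') = {⊤} and L(x,x') = {⊥} for all x. For A ⊆ P set A* := L(A') where A' := {x' | x ∈ A}. Then for every subset A ⊆ P with L(U(A)) = A: L(U(A ∪ A*)) = P and A ∩ A* = {⊥}. In other words, in the Dedekind–MacNeille completion D(P) (closed subsets ordered by inclusion, with join A ∨ B = L(U(A ∪ B)) and meet A ∧ B = A ∩ B), A ∨ A* is the top element P and A ∧ A* is the bottom element {⊥}. -/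
/-!
An upper bound `u` of `A ∪ A*` bounds `A`, so by antitonicity `u' ∈ A*` and hence `u' ≤ u`;
then `u` is an upper bound of `{u, u'}`, which forces `u = ⊤`. So `U(A ∪ A*) = {⊤}` and
`L(U(A ∪ A*)) = P`. Dually, `x ∈ A ∩ A*` gives `x ≤ x'`, so `x` is a lower bound of `{x, x'}`
and `x = ⊥`; conversely `⊥` lies in every closed set.
-/

section Orthocomplement

variable {P : Type*} [Preorder P]

theorem eq_top_of_upperBounds_pair_eq [Top P] {x y : P} (h : upperBounds {x, y} = {⊤})
    (hyx : y ≤ x) : x = ⊤ := by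
  have hx : x ∈ upperBounds {x, y} := by
    rintro z (rfl | rfl)
    exacts [le_rfl, hyx]
  rwa [h] at hx

theorem eq_bot_of_lowerBounds_pair_eq [Bot P] {x y : P} (h : lowerBounds {x, y} = {⊥})
    (hxy : x ≤ y) : x = ⊥ :=
  eq_top_of_upperBounds_pair_eq (P := Pᵒᵈ) h hxy

theorem upperBounds_union_lowerBounds_image_eq [OrderTop P] {n : P → P} (hn : Antitone n)
    (hU : ∀ x, upperBounds {x, n x} = {⊤}) (A : Set P) :
    upperBounds (A ∪ lowerBounds (n '' A)) = {⊤} := by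
  refine Set.eq_singleton_iff_unique_mem.mpr ⟨top_mem_upperBounds _, fun u hu => ?_⟩
  have huA : u ∈ upperBounds A := upperBounds_mono_set Set.subset_union_left hu
  have hnu : n u ∈ lowerBounds (n '' A) := by
    rintro _ ⟨a, ha, rfl⟩
    exact hn (huA ha)
  exact eq_top_of_upperBounds_pair_eq (hU u) (hu (Or.inr hnu))

theorem inter_lowerBounds_image_eq [OrderBot P] {n : P → P}
    (hL : ∀ x, lowerBounds {x, n x} = {⊥}) {A : Set P} (hbot : ⊥ ∈ A) :
    A ∩ lowerBounds (n '' A) = {⊥} := by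
  refine Set.eq_singleton_iff_unique_mem.mpr ⟨⟨hbot, bot_mem_lowerBounds _⟩, ?_⟩
  rintro x ⟨hxA, hx⟩
  exact eq_bot_of_lowerBounds_pair_eq (hL x) (hx ⟨x, hxA, rfl⟩)

end Orthocomplement

theorem stmt_14_general {P : Type*} [PartialOrder P] [BoundedOrder P] (n : P → P)
    (hanti : ∀ x y : P, x ≤ y → n y ≤ n x)
    (hU : ∀ x : P, upperBounds {x, n x} = {⊤})
    (hL : ∀ x : P, lowerBounds {x, n x} = {⊥}) :
    ∀ A : Set P, lowerBounds (upperBounds A) = A →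
      lowerBounds (upperBounds (A ∪ lowerBounds (n '' A))) = Set.univ ∧
      A ∩ lowerBounds (n '' A) = {⊥} := by
  intro A hA
  refine ⟨?_, inter_lowerBounds_image_eq hL (hA ▸ bot_mem_lowerBounds _)⟩
  rw [upperBounds_union_lowerBounds_image_eq (fun x y => hanti x y) hU, lowerBounds_singleton,
    Set.Iic_top]

/-- Let `P` be an orthoposet with antitone involution and
complementation `n`, and set `A* := L(n '' A)`. Then for every closed subset
`A` (i.e. `L(U(A)) = A`): `L(U(A ∪ A*)) = P` and `A ∩ A* = {⊥}`, i.e. in the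
Dedekind–MacNeille completion `A ∨ A* = ⊤` and `A ∧ A* = ⊥`. -/
theorem stmt_14 {P : Type*} [PartialOrder P] [BoundedOrder P] (n : P → P)
    (hanti : ∀ x y : P, x ≤ y → n y ≤ n x) (hinv : ∀ x : P, n (n x) = x)
    (hU : ∀ x : P, upperBounds {x, n x} = {⊤})
    (hL : ∀ x : P, lowerBounds {x, n x} = {⊥}) :
    ∀ A : Set P, lowerBounds (upperBounds A) = A →
      lowerBounds (upperBounds (A ∪ lowerBounds (n '' A))) = Set.univ ∧
      A ∩ lowerBounds (n '' A) = {⊥} :=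
  stmt_14_general n hanti hU hL
end

section
/- Let P be a poset, let D(P) be the complete lattice of closed subsets of P (subsets A with L(U(A)) = A) ordered by inclusion, with join A ∨ B = L(U(A ∪ B)) and meet A ∧ B = A ∩ B, and let D_0(P) be the sublattice of D(P) generated by the principal down-sets {L({x}) | x ∈ P}. If D_0(P) is a modular lattice (for all A, B, C ∈ D_0(P) with A ⊆ C, (A ∨ B) ∩ C = A ∨ (B ∩ C)), then P is strongly modular: for all x, y, z ∈ P, L(U(x,y) ∪ U(x,z)) = L(U({x} ∪ L({y} ∪ U(x,z)))) and L(U(L(x,z) ∪ {y}) ∪ {z}) = L(U(L(x,z) ∪ L(y,z))). -/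
/-! Writing `↓x = L({x})`, identity (3) is the modular law for `↓x ⊆ ↓x ∨ ↓z` with `B = ↓y`, and
identity (4) is the modular law for `↓x ∩ ↓z ⊆ ↓z` with `B = ↓y`. Both sides match once the sets
are normalised with `↓x = Iic x`, `U(↓x) = Ici x = U({x})` and `U(A ∪ B) = U(A) ∩ U(B)`. -/

/-- The members of the sublattice `D₀(P)` of the Dedekind–MacNeille completion
of `P` generated by the principal down-sets `L({x})`, `x ∈ P`: closed under
the join `A ∨ B = L(U(A ∪ B))` and the meet `A ∧ B = A ∩ B` of the
completion. -/
inductive genD0 {P : Type*} [PartialOrder P] : Set P → Prop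
  | principal (x : P) : genD0 (lowerBounds {x})
  | join {A B : Set P} : genD0 A → genD0 B → genD0 (lowerBounds (upperBounds (A ∪ B)))
  | meet {A B : Set P} : genD0 A → genD0 B → genD0 (A ∩ B)

/-- If the sublattice `D₀(P)` of the Dedekind–MacNeille
completion generated by the principal down-sets is modular, then `P` is
strongly modular. -/
theorem stmt_17 {P : Type*} [PartialOrder P]
    (hmod : ∀ A B C : Set P, genD0 A → genD0 B → genD0 C → A ⊆ C →
      lowerBounds (upperBounds (A ∪ B)) ∩ C = lowerBounds (upperBounds (A ∪ (B ∩ C)))) :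
    (∀ x y z : P,
      lowerBounds (upperBounds {x, y} ∪ upperBounds {x, z}) =
        lowerBounds (upperBounds ({x} ∪ lowerBounds ({y} ∪ upperBounds {x, z})))) ∧
    (∀ x y z : P,
      lowerBounds (upperBounds (lowerBounds {x, z} ∪ {y}) ∪ {z}) =
        lowerBounds (upperBounds (lowerBounds {x, z} ∪ lowerBounds {y, z}))) := by
  refine ⟨fun x y z => ?_, fun x y z => ?_⟩
  · have h := hmod (lowerBounds {x}) (lowerBounds {y})
      (lowerBounds (upperBounds (lowerBounds {x} ∪ lowerBounds {z})))
      (.principal x) (.principal y) (.join (.principal x) (.principal z))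
      (Set.subset_union_left.trans (subset_lowerBounds_upperBounds _))
    simpa only [lowerBounds_singleton, upperBounds_Iic, upperBounds_union, upperBounds_insert,
      upperBounds_singleton, lowerBounds_union, lowerBounds_insert] using h
  · have h := hmod (lowerBounds {x} ∩ lowerBounds {z}) (lowerBounds {y}) (lowerBounds {z})
      (.meet (.principal x) (.principal z)) (.principal y) (.principal z)
      Set.inter_subset_right
    simpa only [lowerBounds_singleton, upperBounds_Iic, upperBounds_union, upperBounds_insert,
      upperBounds_singleton, lowerBounds_union, lowerBounds_insert] using h
end
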